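/- arXiv:1304.7391 — 4 statements merged into one kernel-verified Lean document; each statement's English description precedes it below -/
import Mathlib

section
/- If G ≤ Sym(Ω) is λ-homogeneous and intransitive, where λ is a partition of n other than (1,1,…,1), then λ is uniform, i.e., all parts of λ are equal. -/
def IsOrdPartition {n r : ℕ} (lam : Fin r → ℕ) (P : Fin r → Finset (Fin n)) : Prop :=
  (∀ i, (P i).card = lam i) ∧ ∀ x : Fin n, ∃! i, x ∈ P i

def IsLambdaTransitive {n r : ℕ} (G : Subgroup (Equiv.Perm (Fin n))) (lam : Fin r → ℕ) : Prop :=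
  ∀ P Q : Fin r → Finset (Fin n), IsOrdPartition lam P → IsOrdPartition lam Q →
    ∃ g ∈ G, ∀ i, (P i).image ⇑g = Q i

def IsLambdaHomogeneous {n r : ℕ} (G : Subgroup (Equiv.Perm (Fin n))) (lam : Fin r → ℕ) : Prop :=
  ∀ P Q : Fin r → Finset (Fin n), IsOrdPartition lam P → IsOrdPartition lam Q →
    ∃ g ∈ G, (Set.range fun i => (P i).image ⇑g) = Set.range Q

def IsTHomogeneous {n : ℕ} (G : Subgroup (Equiv.Perm (Fin n))) (t : ℕ) : Prop :=
  ∀ A B : Finset (Fin n), A.card = t → B.card = t → ∃ g ∈ G, A.image ⇑g = B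

/-!
Fix a block size `a` and let `T` be the total size of the blocks of size `a`. Every `T`-subset is
the union of the `a`-blocks of some partition of shape `λ`, and an element carrying one partition
to another carries `a`-blocks to `a`-blocks, so a `λ`-homogeneous group is `T`-homogeneous. If `λ`
is not uniform then `0 < T < n`, and a `T`-homogeneous group is then transitive: if `O` is
invariant, `x ∈ O` and `y ∉ O`, the `T`-sets `{x} ∪ C` and `{y} ∪ C` meet `O` in different numbers
of points.
-/

open Finset

lemma Equiv.Perm.exists_image_eq_of_card_eq {α : Type*} [DecidableEq α] {s t : Finset α}
    (h : #s = #t) : ∃ σ : Equiv.Perm α, s.image σ = t := by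
  have := Set.powersetCard.isPretransitive (α := α) (n := #s)
  obtain ⟨σ, hσ⟩ :=
    MulAction.exists_smul_eq (Equiv.Perm α) (⟨s, rfl⟩ : Set.powersetCard α #s) ⟨t, h.symm⟩
  exact ⟨σ, congrArg Subtype.val hσ⟩

namespace IsOrdPartition

variable {n r : ℕ} {lam : Fin r → ℕ} {P : Fin r → Finset (Fin n)}

lemma disjoint (hP : IsOrdPartition lam P) {i j : Fin r} (hij : i ≠ j) : Disjoint (P i) (P j) :=
  disjoint_left.2 fun _ hi hj => hij ((hP.2 _).unique hi hj)

lemma card_biUnion (hP : IsOrdPartition lam P) (S : Finset (Fin r)) :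
    #(S.biUnion P) = ∑ i ∈ S, lam i := by
  rw [Finset.card_biUnion fun i _ j _ hij => hP.disjoint hij]
  exact sum_congr rfl fun i _ => hP.1 i

lemma image_perm (hP : IsOrdPartition lam P) (σ : Equiv.Perm (Fin n)) :
    IsOrdPartition lam fun i => (P i).image σ := by
  refine ⟨fun i => (card_image_of_injective _ σ.injective).trans (hP.1 i), fun x => ?_⟩
  simpa [mem_image, ← Equiv.eq_symm_apply] using hP.2 (σ.symm x)

lemma exists_of_sum_eq (hsum : ∑ i, lam i = n) :
    ∃ P : Fin r → Finset (Fin n), IsOrdPartition lam P := by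
  let e : (Σ i, Fin (lam i)) ≃ Fin n := finSigmaFinEquiv.trans (finCongr hsum)
  refine ⟨fun i => univ.image fun j => e ⟨i, j⟩, fun i => ?_, fun x => ?_⟩
  · exact (card_image_of_injective _ fun j k hjk => by simpa using e.injective hjk).trans (by simp)
  · refine ⟨(e.symm x).1, mem_image.2 ⟨(e.symm x).2, by simp⟩, fun k hk => ?_⟩
    obtain ⟨j, -, rfl⟩ := mem_image.1 hk
    simp

lemma exists_biUnion_eq (hsum : ∑ i, lam i = n) (S : Finset (Fin r)) {A : Finset (Fin n)}
    (hA : #A = ∑ i ∈ S, lam i) :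
    ∃ P : Fin r → Finset (Fin n), IsOrdPartition lam P ∧ S.biUnion P = A := by
  obtain ⟨P, hP⟩ := exists_of_sum_eq hsum
  obtain ⟨σ, hσ⟩ := Equiv.Perm.exists_image_eq_of_card_eq ((hP.card_biUnion S).trans hA.symm)
  exact ⟨_, hP.image_perm σ, by rw [← hσ, biUnion_image]⟩

lemma image_biUnion_filter_eq (hP : IsOrdPartition lam P) {Q : Fin r → Finset (Fin n)}
    (hQ : IsOrdPartition lam Q) {g : Equiv.Perm (Fin n)}
    (hg : (Set.range fun i => (P i).image g) = Set.range Q) (a : ℕ) :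
    ((univ.filter (lam · = a)).biUnion P).image g = (univ.filter (lam · = a)).biUnion Q := by
  have hcard : ∀ i, #((P i).image g) = lam i := (hP.image_perm g).1
  ext z
  simp only [biUnion_image, mem_biUnion, mem_filter, mem_univ, true_and]
  constructor
  · rintro ⟨i, rfl, hz⟩
    obtain ⟨k, hk⟩ : (P i).image g ∈ Set.range Q := hg ▸ ⟨i, rfl⟩
    exact ⟨k, by rw [← hQ.1 k, hk, hcard], hk ▸ hz⟩
  · rintro ⟨k, rfl, hz⟩
    obtain ⟨i, hi : (P i).image g = Q k⟩ : Q k ∈ Set.range fun i => (P i).image g :=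
      hg.symm ▸ ⟨k, rfl⟩
    exact ⟨i, by rw [← hcard, hi, hQ.1 k], hi ▸ hz⟩

end IsOrdPartition

variable {n r : ℕ} {G : Subgroup (Equiv.Perm (Fin n))}

theorem IsLambdaHomogeneous.isTHomogeneous {lam : Fin r → ℕ} (h : IsLambdaHomogeneous G lam)
    (hsum : ∑ i, lam i = n) (a : ℕ) :
    IsTHomogeneous G (∑ i ∈ univ.filter (lam · = a), lam i) := by
  intro A B hA hB
  obtain ⟨P, hP, rfl⟩ := IsOrdPartition.exists_biUnion_eq hsum _ hA
  obtain ⟨Q, hQ, rfl⟩ := IsOrdPartition.exists_biUnion_eq hsum _ hB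
  obtain ⟨g, hg, hPQ⟩ := h P Q hP hQ
  exact ⟨g, hg, hP.image_biUnion_filter_eq hQ hPQ a⟩

namespace IsTHomogeneous

variable {t : ℕ}

lemma mem_of_mem_of_invariant (h : IsTHomogeneous G t) (ht0 : 0 < t) (htn : t < n)
    {O : Finset (Fin n)} (hO : ∀ g ∈ G, ∀ z ∈ O, g z ∈ O) {x y : Fin n} (hx : x ∈ O) :
    y ∈ O := by
  by_contra hy
  have hxy : x ≠ y := by rintro rfl; exact hy hx
  obtain ⟨C, hC, hCc⟩ := exists_subset_card_eq (s := ({x, y}ᶜ : Finset (Fin n))) (n := t - 1)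
    (by rw [card_compl, card_pair hxy, Fintype.card_fin]; omega)
  have hxC : x ∉ C := fun hxC => mem_compl.1 (hC hxC) (mem_insert_self x {y})
  have hyC : y ∉ C := fun hyC => mem_compl.1 (hC hyC) (mem_insert_of_mem (mem_singleton_self y))
  obtain ⟨g, hg, hgxy⟩ := h (insert x C) (insert y C)
    (by rw [card_insert_of_notMem hxC]; omega) (by rw [card_insert_of_notMem hyC]; omega)
  have hmaps : (insert x C ∩ O).image g ⊆ insert y C ∩ O := by
    rw [← hgxy]
    intro z hz
    obtain ⟨w, hw, rfl⟩ := mem_image.1 hz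
    rw [mem_inter] at hw ⊢
    exact ⟨mem_image_of_mem _ hw.1, hO g hg w hw.2⟩
  have := card_le_card hmaps
  rw [card_image_of_injective _ g.injective, insert_inter_of_mem hx, insert_inter_of_notMem hy,
    card_insert_of_notMem fun h => hxC (mem_inter.1 h).1] at this
  omega

lemma exists_apply_eq (h : IsTHomogeneous G t) (ht0 : 0 < t) (htn : t < n) (x y : Fin n) :
    ∃ g ∈ G, g x = y := by
  classical
  have hO : ∀ g ∈ G, ∀ z ∈ univ.filter fun z => ∃ k ∈ G, k x = z,
      g z ∈ univ.filter fun z => ∃ k ∈ G, k x = z := by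
    simp only [mem_filter, mem_univ, true_and]
    rintro g hg _ ⟨k, hk, rfl⟩
    exact ⟨g * k, G.mul_mem hg hk, rfl⟩
  simpa using h.mem_of_mem_of_invariant ht0 htn hO (y := y) (by simpa using ⟨1, G.one_mem, rfl⟩)

end IsTHomogeneous

theorem stmt_7_general {n r : ℕ} (G : Subgroup (Equiv.Perm (Fin n))) (lam : Fin r → ℕ)
    (hpos : ∀ i, 0 < lam i) (hsum : ∑ i, lam i = n)
    (h : IsLambdaHomogeneous G lam)
    (hintrans : ¬ ∀ x y : Fin n, ∃ g ∈ G, g x = y) :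
    ∀ i j, lam i = lam j := by
  by_contra! ⟨i, j, hij⟩
  set S := univ.filter (lam · = lam i)
  have hS0 : 0 < ∑ k ∈ S, lam k :=
    (hpos i).trans_le (single_le_sum (fun _ _ => Nat.zero_le _) (by simp [S]))
  have hSn : ∑ k ∈ S, lam k < n := hsum ▸
    sum_lt_sum_of_subset (subset_univ S) (mem_univ j) (by simp [S, Ne.symm hij]) (hpos j)
      fun _ _ _ => Nat.zero_le _
  exact hintrans ((h.isTHomogeneous hsum (lam i)).exists_apply_eq hS0 hSn)

theorem stmt_7 {n r : ℕ} (G : Subgroup (Equiv.Perm (Fin n))) (lam : Fin r → ℕ)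
    (hpos : ∀ i, 0 < lam i) (hsum : ∑ i, lam i = n)
    (hlam : ∃ i, lam i ≠ 1)
    (h : IsLambdaHomogeneous G lam)
    (hintrans : ¬ ∀ x y : Fin n, ∃ g ∈ G, g x = y) :
    ∀ i j, lam i = lam j :=
  stmt_7_general G lam hpos hsum h hintrans
end

section
/- If (a, G) is an Sₙ-pair, where a ∈ Tₙ \ Sₙ has kernel partition of type λ, then G is λ-homogeneous. -/
def permsIn {n : ℕ} (G : Subgroup (Equiv.Perm (Fin n))) : Set (Function.End (Fin n)) :=
  {f | ∃ g ∈ G, f = ⇑g}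

/-- The submonoid of the full transformation monoid generated by `a` and the group `G`. -/
def genMonoid {n : ℕ} (a : Function.End (Fin n)) (G : Subgroup (Equiv.Perm (Fin n))) :
    Submonoid (Function.End (Fin n)) :=
  Submonoid.closure ({a} ∪ permsIn G)

/-- `(a, G)` is an `Sₙ`-pair: the non-invertible parts of the monoids generated by
`{a} ∪ G` and by `{a} ∪ Sₙ` coincide. -/
def SnPair {n : ℕ} (a : Function.End (Fin n)) (G : Subgroup (Equiv.Perm (Fin n))) : Prop :=
  {x : Function.End (Fin n) | x ∈ genMonoid a G ∧ ¬ Function.Bijective x} =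
  {x : Function.End (Fin n) | x ∈ genMonoid a ⊤ ∧ ¬ Function.Bijective x}

def rank {n : ℕ} (f : Function.End (Fin n)) : ℕ := (Finset.univ.image f).card

/-- The kernel partition of `a` has type `lam`: there is an ordered partition of type `lam`
whose blocks are exactly the fibres of `a`. -/
def HasKernelType {n r : ℕ} (a : Function.End (Fin n)) (lam : Fin r → ℕ) : Prop :=
  ∃ P : Fin r → Finset (Fin n), IsOrdPartition lam P ∧
    ∀ i, ∀ x ∈ P i, ∀ y : Fin n, y ∈ P i ↔ a x = a y

/-!
Let `P` be the kernel partition of `a` and `Q` any partition of the same type; choose `σ ∈ Sₙ`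
with `σ P = Q`. Then `a ∘ σ⁻¹` is a non-invertible element of `⟨a, Sₙ⟩`, hence of `⟨a, G⟩`, so
it factors as `u ∘ a ∘ g` with `g ∈ G`. Its kernel `Q` is therefore coarser than the kernel
`g⁻¹ P` of `a ∘ g`; having equally many nonempty blocks, the two coincide, so `g Q = P`.
Every partition of type `λ` thus lies in the `G`-orbit of `P`.
-/

open Equiv Pointwise

namespace IsOrdPartition

variable {n r : ℕ} {lam : Fin r → ℕ} {P Q R : Fin r → Finset (Fin n)}

noncomputable def index (hP : IsOrdPartition lam P) (x : Fin n) : Fin r := (hP.2 x).choose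

lemma mem_iff_index_eq (hP : IsOrdPartition lam P) {x : Fin n} {i : Fin r} :
    x ∈ P i ↔ hP.index x = i :=
  ⟨fun hx => ((hP.2 x).choose_spec.2 i hx).symm, fun h => h ▸ (hP.2 x).choose_spec.1⟩

lemma card_index_fiber (hP : IsOrdPartition lam P) (i : Fin r) :
    Fintype.card {x // hP.index x = i} = lam i := by
  rw [← hP.1 i, ← Fintype.card_coe]
  exact Fintype.card_congr (subtypeEquivRight fun _ => hP.mem_iff_index_eq.symm)

lemma smul (hP : IsOrdPartition lam P) (g : Perm (Fin n)) :
    IsOrdPartition lam fun i => g • P i :=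
  ⟨fun i => by rw [Finset.card_smul_finset, hP.1], fun x => by
    simpa only [← Finset.inv_smul_mem_iff] using hP.2 (g⁻¹ • x)⟩

lemma exists_perm_smul_eq (hP : IsOrdPartition lam P) (hQ : IsOrdPartition lam Q) :
    ∃ σ : Perm (Fin n), ∀ i, σ • P i = Q i := by
  let e : ∀ i, {x // hP.index x = i} ≃ {x // hQ.index x = i} := fun i =>
    Fintype.equivOfCardEq ((hP.card_index_fiber i).trans (hQ.card_index_fiber i).symm)
  refine ⟨ofFiberEquiv e, fun i => Finset.ext fun y => ?_⟩
  rw [← Finset.inv_smul_mem_iff, hP.mem_iff_index_eq, hQ.mem_iff_index_eq,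
    ← ofFiberEquiv_map e ((ofFiberEquiv e)⁻¹ • y), ← Perm.smul_def, smul_inv_smul]

lemma range_eq_of_forall_exists_subset (hpos : ∀ i, 0 < lam i) (hR : IsOrdPartition lam R)
    (hQ : IsOrdPartition lam Q) (hsub : ∀ i, ∃ j, R i ⊆ Q j) : Set.range R = Set.range Q := by
  choose φ hφ using hsub
  have hφ_index : ∀ x, φ (hR.index x) = hQ.index x := fun x =>
    (hQ.mem_iff_index_eq.mp (hφ _ (hR.mem_iff_index_eq.mpr rfl))).symm
  have hsurj : Function.Surjective φ := by
    intro j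
    obtain ⟨x, hx⟩ := Finset.card_pos.mp ((hQ.1 j).symm ▸ hpos j)
    exact ⟨hR.index x, (hφ_index x).trans (hQ.mem_iff_index_eq.mp hx)⟩
  have hinj : Function.Injective φ := Finite.injective_iff_surjective.mpr hsurj
  have hblock : ∀ i, R i = Q (φ i) := fun i => Finset.ext fun x => by
    rw [hR.mem_iff_index_eq, hQ.mem_iff_index_eq, ← hφ_index, hinj.eq_iff]
  rw [funext hblock]
  exact hsurj.range_comp Q

end IsOrdPartition

def IsFibrePartition {n r : ℕ} {β : Type*} (f : Fin n → β) (P : Fin r → Finset (Fin n)) : Prop :=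
  ∀ i, ∀ x ∈ P i, ∀ y, y ∈ P i ↔ f x = f y

namespace IsFibrePartition

variable {n r : ℕ} {β γ : Type*} {f : Fin n → β} {P Q R : Fin r → Finset (Fin n)}

lemma smul (hP : IsFibrePartition f P) (g : Perm (Fin n)) :
    IsFibrePartition (fun x => f (g⁻¹ • x)) fun i => g • P i := by
  intro i x hx y
  rw [← Finset.inv_smul_mem_iff] at hx ⊢
  exact hP i _ hx _

lemma subset_of_comp {u : β → γ} (hR : IsFibrePartition f R)
    (hQ : IsFibrePartition (fun x => u (f x)) Q) {i j : Fin r} {x : Fin n} (hxR : x ∈ R i)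
    (hxQ : x ∈ Q j) : R i ⊆ Q j := fun y hy =>
  (hQ j x hxQ y).mpr (congrArg u ((hR i x hxR y).mp hy))

lemma range_eq_of_comp {lam : Fin r → ℕ} {u : β → γ} (hpos : ∀ i, 0 < lam i)
    (hR : IsOrdPartition lam R) (hQ : IsOrdPartition lam Q) (hRf : IsFibrePartition f R)
    (hQf : IsFibrePartition (fun x => u (f x)) Q) : Set.range R = Set.range Q := by
  refine hR.range_eq_of_forall_exists_subset hpos hQ fun i => ?_
  obtain ⟨x, hx⟩ := Finset.card_pos.mp ((hR.1 i).symm ▸ hpos i)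
  exact ⟨hQ.index x, hRf.subset_of_comp hQf hx (hQ.mem_iff_index_eq.mpr rfl)⟩

end IsFibrePartition

section SnPair

variable {n : ℕ} {a : Function.End (Fin n)} {G : Subgroup (Perm (Fin n))}

lemma mem_genMonoid_cases {x : Function.End (Fin n)} (hx : x ∈ genMonoid a G) :
    x ∈ permsIn G ∨ ∃ u : Fin n → Fin n, ∃ g ∈ G, ∀ y, x y = u (a (g y)) := by
  induction hx using Submonoid.closure_induction with
  | mem x hx =>
    rcases hx with rfl | hx
    · exact Or.inr ⟨id, 1, one_mem G, fun _ => rfl⟩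
    · exact Or.inl hx
  | one => exact Or.inl ⟨1, one_mem G, rfl⟩
  | mul x y _ _ ihx ihy =>
    rcases ihy with ⟨g, hg, rfl⟩ | ⟨u, g, hg, hy⟩
    · rcases ihx with ⟨g', hg', rfl⟩ | ⟨u, g', hg', hx⟩
      · exact Or.inl ⟨g' * g, mul_mem hg' hg, rfl⟩
      · exact Or.inr ⟨u, g' * g, mul_mem hg' hg, fun z => hx (g z)⟩
    · exact Or.inr ⟨fun z => x (u z), g, hg, fun z => congrArg x (hy z)⟩

lemma SnPair.exists_factor (h : SnPair a G) (ha : ¬ Function.Bijective a) (σ : Perm (Fin n)) :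
    ∃ u : Fin n → Fin n, ∃ g ∈ G, ∀ y, a (σ y) = u (a (g y)) := by
  let b : Function.End (Fin n) := a * MulAction.toEndHom σ
  have hb : b ∈ genMonoid a ⊤ :=
    mul_mem (Submonoid.subset_closure (Or.inl rfl))
      (Submonoid.subset_closure (Or.inr ⟨σ, Subgroup.mem_top σ, rfl⟩))
  have hnb : ¬ Function.Bijective b :=
    fun hb => ha ((Function.Bijective.of_comp_iff a σ.bijective).mp hb)
  have hG : b ∈ genMonoid a G := ((Set.ext_iff.mp h b).mpr ⟨hb, hnb⟩).1
  refine (mem_genMonoid_cases hG).resolve_left ?_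
  rintro ⟨g, -, hg⟩
  exact hnb (hg ▸ g.bijective)

lemma SnPair.exists_smul_range_eq {r : ℕ} {lam : Fin r → ℕ} {P Q : Fin r → Finset (Fin n)}
    (h : SnPair a G) (ha : ¬ Function.Bijective a) (hpos : ∀ i, 0 < lam i)
    (hP : IsOrdPartition lam P) (hPf : IsFibrePartition a P) (hQ : IsOrdPartition lam Q) :
    ∃ g ∈ G, g • Set.range Q = Set.range P := by
  obtain ⟨σ, hσ⟩ := hP.exists_perm_smul_eq hQ
  obtain ⟨u, g, hg, hfac⟩ := h.exists_factor ha σ⁻¹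
  have hQf : IsFibrePartition (fun x => u (a (g x))) Q := by
    simpa only [hσ, Perm.smul_def, hfac] using hPf.smul σ
  have hRf : IsFibrePartition (fun x => a (g x)) fun i => g⁻¹ • P i := by
    simpa only [inv_inv, Perm.smul_def] using hPf.smul g⁻¹
  have hRQ := hRf.range_eq_of_comp hpos (hP.smul g⁻¹) hQ hQf
  refine ⟨g, hg, ?_⟩
  rw [← hRQ, Set.smul_set_range]
  simp only [smul_inv_smul]

end SnPair

theorem stmt_12 {n r : ℕ} (a : Function.End (Fin n)) (G : Subgroup (Equiv.Perm (Fin n)))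
    (lam : Fin r → ℕ) (hpos : ∀ i, 0 < lam i)
    (ha : ¬ Function.Bijective a) (hker : HasKernelType a lam) (h : SnPair a G) :
    IsLambdaHomogeneous G lam := by
  obtain ⟨P, hP, hPf⟩ := hker
  intro Q₁ Q₂ hQ₁ hQ₂
  obtain ⟨g₁, hg₁, h₁⟩ := h.exists_smul_range_eq ha hpos hP hPf hQ₁
  obtain ⟨g₂, hg₂, h₂⟩ := h.exists_smul_range_eq ha hpos hP hPf hQ₂
  refine ⟨g₂⁻¹ * g₁, mul_mem (inv_mem hg₂) hg₁, ?_⟩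
  change (Set.range fun i => (g₂⁻¹ * g₁) • Q₁ i) = _
  rw [Set.range_smul, mul_smul, h₁, ← h₂, inv_smul_smul]
end

section
/- For a ∈ Tₙ \ Sₙ, the set ⟨a, Sₙ⟩ \ Sₙ equals {b ∈ Tₙ : there exists g ∈ Sₙ such that ker(a)g ⊆ ker(b)}, where ker(a)g denotes the kernel of a translated by g, and the inclusion is of equivalence relations. -/
section Aux

open Finset

lemma exists_perm_ext {n : ℕ} {s : Finset (Fin n)} {f : Fin n → Fin n}
    (hf : Set.InjOn f ↑s) : ∃ π : Equiv.Perm (Fin n), ∀ x ∈ s, π x = f x := by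
  classical
  have hinj : Function.Injective
      (fun x : {x // x ∈ s} => (⟨f x.1, Finset.mem_image_of_mem f x.2⟩ : {y // y ∈ s.image f})) := by
    rintro ⟨x, hx⟩ ⟨y, hy⟩ h
    simp only [Subtype.mk.injEq] at h
    exact Subtype.ext (hf hx hy h)
  have hcard : Fintype.card {x // x ∈ s} = Fintype.card {y // y ∈ s.image f} := by
    simp only [Fintype.card_coe]
    exact (Finset.card_image_of_injOn hf).symm
  let e := Equiv.ofBijective _ ((Fintype.bijective_iff_injective_and_card _).2 ⟨hinj, hcard⟩)
  refine ⟨e.extendSubtype, fun x hx => ?_⟩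
  have h := e.extendSubtype_apply_of_mem x hx
  simpa [e, Equiv.ofBijective] using h

def pEnd {n : ℕ} (π : Equiv.Perm (Fin n)) : Function.End (Fin n) := ⇑π

lemma a_mem {n : ℕ} (a : Function.End (Fin n)) : a ∈ genMonoid a ⊤ :=
  Submonoid.subset_closure (Or.inl rfl)

lemma perm_mem {n : ℕ} (a : Function.End (Fin n)) (π : Equiv.Perm (Fin n)) :
    pEnd π ∈ genMonoid a ⊤ :=
  Submonoid.subset_closure (Or.inr ⟨π, Subgroup.mem_top π, rfl⟩)

lemma key {n : ℕ} {a : Function.End (Fin n)} (ha' : ¬ Function.Injective a) :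
    ∀ (b : Function.End (Fin n)),
      (∃ g : Equiv.Perm (Fin n), ∀ x y, a x = a y → b (g x) = b (g y)) →
      b ∈ genMonoid a ⊤ := by
  classical
  suffices H : ∀ m (b : Function.End (Fin n)), n - rank b = m →
      (∃ g : Equiv.Perm (Fin n), ∀ x y, a x = a y → b (g x) = b (g y)) →
      b ∈ genMonoid a ⊤ by
    exact fun b hb => H _ b rfl hb
  intro m
  induction m using Nat.strong_induction_on with
  | _ m ih =>
  rintro b hm ⟨g, hg⟩
  -- a section of `a` on its image
  set sec : Fin n → Fin n := fun z => if h : ∃ x, a x = z then h.choose else z with hsecdef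
  have hsec : ∀ z ∈ Finset.univ.image a, a (sec z) = z := by
    intro z hz
    replace hz : ∃ x, a x = z := by
      obtain ⟨x, -, hx⟩ := Finset.mem_image.mp hz; exact ⟨x, hx⟩
    simp only [hsecdef, dif_pos hz]
    exact hz.choose_spec
  have hfa : ∀ x, b (g (sec (a x))) = b (g x) := by
    intro x
    exact hg _ _ (hsec (a x) (Finset.mem_image_of_mem a (Finset.mem_univ x)))
  set f : Fin n → Fin n := fun z => b (g (sec z)) with hfdef
  have hfa' : ∀ x, f (a x) = b (g x) := hfa
  by_cases hcase : ∀ x y, b (g x) = b (g y) → a x = a y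
  · -- `b` has the same rank as `a` : `b = π ∘ a ∘ g⁻¹`
    have hinj : Set.InjOn f ↑(Finset.univ.image a) := by
      intro z1 h1 z2 h2 he
      replace h1 := Finset.mem_image.mp (Finset.mem_coe.mp h1)
      replace h2 := Finset.mem_image.mp (Finset.mem_coe.mp h2)
      obtain ⟨x1, -, rfl⟩ := h1
      obtain ⟨x2, -, rfl⟩ := h2
      rw [hfa' x1, hfa' x2] at he
      exact hcase _ _ he
    obtain ⟨π, hπ⟩ := exists_perm_ext hinj
    have hbeq : b = pEnd π * a * pEnd g⁻¹ := by
      funext z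
      show b z = π (a (g⁻¹ z))
      rw [hπ _ (Finset.mem_image_of_mem a (Finset.mem_univ _)), hfa' (g⁻¹ z),
        Equiv.Perm.coe_inv, Equiv.apply_symm_apply]
    rw [hbeq]
    exact mul_mem (mul_mem (perm_mem a π) (a_mem a)) (perm_mem a g⁻¹)
  · push_neg at hcase
    obtain ⟨x₀, y₀, hbxy, haxy⟩ := hcase
    have hbni : ¬ Function.Injective b := by
      intro hbinj
      exact haxy (congrArg a (g.injective (hbinj hbxy)))
    obtain ⟨c₀, hc₀⟩ : ∃ c₀, c₀ ∉ Finset.univ.image b := by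
      by_contra h
      push_neg at h
      have hsurj : Function.Surjective b := by
        intro z
        obtain ⟨x, -, hx⟩ := Finset.mem_image.mp (h z)
        exact ⟨x, hx⟩
      exact hbni (Finite.injective_iff_surjective.mpr hsurj)
    -- the split function b'
    set b' : Function.End (Fin n) := fun z => if a (g⁻¹ z) = a x₀ then c₀ else b z with hb'def
    have hb'gx : ∀ x, b' (g x) = if a x = a x₀ then c₀ else b (g x) := by
      intro x; simp only [hb'def, Equiv.Perm.coe_inv, Equiv.symm_apply_apply]
    have hgb' : ∀ x y, a x = a y → b' (g x) = b' (g y) := by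
      intro x y hxy
      rw [hb'gx, hb'gx, hxy]
      by_cases h : a y = a x₀
      · rw [if_pos h, if_pos h]
      · rw [if_neg h, if_neg h]; exact hg x y hxy
    have hbz : ∀ z, a (g⁻¹ z) = a x₀ → b z = b (g x₀) := by
      intro z h
      have := hg (g⁻¹ z) x₀ h
      rwa [Equiv.Perm.coe_inv, Equiv.apply_symm_apply] at this
    have hb'c₀ : b' (g x₀) = c₀ := by rw [hb'gx, if_pos rfl]
    have hb'y₀ : b' (g y₀) = b (g y₀) := by
      rw [hb'gx, if_neg (fun h => haxy h.symm)]
    have himg : Finset.univ.image b' = insert c₀ (Finset.univ.image b) := by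
      apply Finset.Subset.antisymm
      · intro w hw
        obtain ⟨z, -, rfl⟩ := Finset.mem_image.mp hw
        by_cases h : a (g⁻¹ z) = a x₀
        · have : b' z = c₀ := by simp only [hb'def, if_pos h]
          rw [this]; exact Finset.mem_insert_self _ _
        · have : b' z = b z := by simp only [hb'def, if_neg h]
          rw [this]
          exact Finset.mem_insert_of_mem (Finset.mem_image_of_mem b (Finset.mem_univ z))
      · intro w hw
        rcases Finset.mem_insert.mp hw with rfl | hw
        · rw [← hb'c₀]; exact Finset.mem_image_of_mem b' (Finset.mem_univ _)
        · obtain ⟨z, -, rfl⟩ := Finset.mem_image.mp hw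
          by_cases h : a (g⁻¹ z) = a x₀
          · rw [hbz z h, hbxy, ← hb'y₀]
            exact Finset.mem_image_of_mem b' (Finset.mem_univ _)
          · have : b z = b' z := by simp only [hb'def, if_neg h]
            rw [this]; exact Finset.mem_image_of_mem b' (Finset.mem_univ _)
    have hrank' : rank b' = rank b + 1 := by
      rw [rank, rank, himg, Finset.card_insert_of_notMem hc₀]
    have hrbn : rank b' ≤ n := by
      calc rank b' = (Finset.univ.image b').card := rfl
        _ ≤ (Finset.univ : Finset (Fin n)).card := Finset.card_le_univ _
        _ = n := Finset.card_fin n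
    have hb'mem : b' ∈ genMonoid a ⊤ := ih (n - rank b') (by omega) b' rfl ⟨g, hgb'⟩
    -- the collapsing map
    obtain ⟨u, v, hauv, huv⟩ := Function.not_injective_iff.mp ha'
    set D := (Finset.univ.image b).erase (b (g x₀)) with hDdef
    set B := (Finset.univ.image a).erase (a u) with hBdef
    have hmemb : b (g x₀) ∈ Finset.univ.image b := Finset.mem_image_of_mem b (Finset.mem_univ _)
    have hmema : a u ∈ Finset.univ.image a := Finset.mem_image_of_mem a (Finset.mem_univ _)
    -- rank b < rank a
    have himb : Finset.univ.image b = (Finset.univ.image a).image f := by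
      apply Finset.Subset.antisymm
      · intro w hw
        obtain ⟨z, -, rfl⟩ := Finset.mem_image.mp hw
        have : f (a (g⁻¹ z)) = b z := by rw [hfa' (g⁻¹ z), Equiv.Perm.coe_inv, Equiv.apply_symm_apply]
        rw [← this]
        exact Finset.mem_image_of_mem f (Finset.mem_image_of_mem a (Finset.mem_univ _))
      · intro w hw
        obtain ⟨y, hy, rfl⟩ := Finset.mem_image.mp hw
        obtain ⟨x, -, rfl⟩ := Finset.mem_image.mp hy
        rw [hfa' x]
        exact Finset.mem_image_of_mem b (Finset.mem_univ _)
    have h3 : rank b < rank a := by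
      have hle : ((Finset.univ.image a).image f).card ≤ (Finset.univ.image a).card :=
        Finset.card_image_le
      rcases lt_or_eq_of_le hle with hlt | heq
      · show (Finset.univ.image b).card < (Finset.univ.image a).card
        rw [himb]; exact hlt
      · exfalso
        have hinj := Finset.injOn_of_card_image_eq heq
        exact haxy (hinj (Finset.mem_coe.mpr (Finset.mem_image_of_mem a (Finset.mem_univ x₀)))
          (Finset.mem_coe.mpr (Finset.mem_image_of_mem a (Finset.mem_univ y₀)))
          (by rw [hfa' x₀, hfa' y₀]; exact hbxy))
    have hDB : D.card ≤ B.card := by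
      rw [hDdef, hBdef, Finset.card_erase_of_mem hmemb, Finset.card_erase_of_mem hmema]
      have h4 : (Finset.univ.image b).card < (Finset.univ.image a).card := h3
      omega
    obtain ⟨emb⟩ : Nonempty (↥D ↪ ↥B) :=
      Function.Embedding.nonempty_of_card_le (by simpa [Fintype.card_coe] using hDB)
    set j : Fin n → Fin n := fun w => if h : w ∈ D then (emb ⟨w, h⟩ : Fin n) else w with hjdef
    have hjB : ∀ w ∈ D, j w ∈ B := by
      intro w hw; simp only [hjdef, dif_pos hw]; exact (emb ⟨w, hw⟩).2
    have hjinj : ∀ w1 ∈ D, ∀ w2 ∈ D, j w1 = j w2 → w1 = w2 := by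
      intro w1 h1 w2 h2 he
      simp only [hjdef, dif_pos h1, dif_pos h2] at he
      exact congrArg Subtype.val (emb.injective (Subtype.ext he))
    set jinv : Fin n → Fin n := fun z => if h : ∃ w ∈ D, j w = z then h.choose else z with hjinvdef
    have hjinv : ∀ w ∈ D, jinv (j w) = w := by
      intro w hw
      have hex : ∃ w' ∈ D, j w' = j w := ⟨w, hw, rfl⟩
      simp only [hjinvdef, dif_pos hex]
      obtain ⟨h1, h2⟩ := hex.choose_spec
      exact hjinj _ h1 _ hw h2
    have hBsub : ∀ z ∈ B, z ∈ Finset.univ.image a ∧ z ≠ a u := fun z hz =>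
      ⟨Finset.mem_of_mem_erase hz, Finset.ne_of_mem_erase hz⟩
    -- σ
    have hne1 : b (g x₀) ≠ c₀ := fun h => hc₀ (h ▸ hmemb)
    set σ : Fin n → Fin n :=
      fun w => if w = c₀ then u else if w = b (g x₀) then v else sec (j w) with hσdef
    have hσc : σ c₀ = u := by simp only [hσdef, if_pos rfl]
    have hσb : σ (b (g x₀)) = v := by simp [hσdef, hne1]
    have hσD : ∀ w ∈ D, a (σ w) = j w := by
      intro w hw
      have hw1 : w ≠ c₀ := fun h => hc₀ (h ▸ Finset.mem_of_mem_erase hw)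
      have hw2 : w ≠ b (g x₀) := Finset.ne_of_mem_erase hw
      simp only [hσdef, if_neg hw1, if_neg hw2]
      exact hsec _ (hBsub _ (hjB w hw)).1
    have hσDne : ∀ w ∈ D, a (σ w) ≠ a u := by
      intro w hw
      rw [hσD w hw]
      exact (hBsub _ (hjB w hw)).2
    have himg2 : Finset.univ.image b' = insert c₀ (insert (b (g x₀)) D) := by
      rw [himg, hDdef, Finset.insert_erase hmemb]
    have hσinj : Set.InjOn σ ↑(Finset.univ.image b') := by
      rw [himg2]
      intro p hp q hq he
      simp only [Finset.coe_insert, Set.mem_insert_iff, Finset.mem_coe] at hp hq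
      rcases hp with rfl | rfl | hp <;> rcases hq with rfl | rfl | hq
      · rfl
      · rw [hσc, hσb] at he; exact absurd he huv
      · rw [hσc] at he
        exact absurd (congrArg a he).symm (hσDne _ hq)
      · rw [hσc, hσb] at he; exact absurd he.symm huv
      · rfl
      · rw [hσb] at he
        have : a (σ q) = a u := by rw [← he, ← hauv]
        exact absurd this (hσDne _ hq)
      · rw [hσc] at he
        exact absurd (congrArg a he) (hσDne _ hp)
      · rw [hσb] at he
        have : a (σ p) = a u := by rw [he, ← hauv]
        exact absurd this (hσDne _ hp)
      · exact hjinj _ hp _ hq (by rw [← hσD _ hp, ← hσD _ hq, he])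
    obtain ⟨σ', hσ'⟩ := exists_perm_ext hσinj
    -- π
    set E := insert (a u) (D.image j) with hEdef
    set ρ : Fin n → Fin n := fun z => if z = a u then b (g x₀) else jinv z with hρdef
    have hρa : ρ (a u) = b (g x₀) := by simp only [hρdef, if_pos rfl]
    have hρj : ∀ w ∈ D, ρ (j w) = w := by
      intro w hw
      simp only [hρdef, if_neg (hBsub _ (hjB w hw)).2]
      exact hjinv w hw
    have hρinj : Set.InjOn ρ ↑E := by
      rw [hEdef]
      intro p hp q hq he
      simp only [Finset.coe_insert, Set.mem_insert_iff, Finset.mem_coe,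
        Finset.mem_image] at hp hq
      rcases hp with rfl | ⟨w1, hw1, rfl⟩ <;> rcases hq with rfl | ⟨w2, hw2, rfl⟩
      · rfl
      · rw [hρa, hρj _ hw2] at he
        exact absurd he.symm (Finset.ne_of_mem_erase hw2)
      · rw [hρa, hρj _ hw1] at he
        exact absurd he (Finset.ne_of_mem_erase hw1)
      · rw [hρj _ hw1, hρj _ hw2] at he; rw [he]
    obtain ⟨π, hπ⟩ := exists_perm_ext hρinj
    have hπau : π (a u) = b (g x₀) := by
      rw [hπ _ (by rw [hEdef]; exact Finset.mem_insert_self _ _), hρa]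
    -- final computation
    have hfinal : ∀ z, π (a (σ' (b' z))) = b z := by
      intro z
      have hmem' : b' z ∈ Finset.univ.image b' := Finset.mem_image_of_mem b' (Finset.mem_univ z)
      rw [hσ' _ hmem']
      by_cases h : a (g⁻¹ z) = a x₀
      · have hb'z : b' z = c₀ := by simp only [hb'def, if_pos h]
        rw [hb'z, hσc, hπau, hbz z h]
      · have hb'z : b' z = b z := by simp only [hb'def, if_neg h]
        rw [hb'z]
        by_cases h2 : b z = b (g x₀)
        · rw [h2, hσb, ← hauv, hπau]
        · have hbD : b z ∈ D := by
            rw [hDdef]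
            exact Finset.mem_erase.mpr ⟨h2, Finset.mem_image_of_mem b (Finset.mem_univ z)⟩
          rw [hσD _ hbD]
          have hjE : j (b z) ∈ E := by
            rw [hEdef]
            exact Finset.mem_insert_of_mem (Finset.mem_image_of_mem j hbD)
          rw [hπ _ hjE, hρj _ hbD]
    have hbeq : b = pEnd π * a * pEnd σ' * b' := by
      funext z
      exact (hfinal z).symm
    rw [hbeq]
    exact mul_mem (mul_mem (mul_mem (perm_mem a π) (a_mem a)) (perm_mem a σ')) hb'mem

lemma factor_of_mem {n : ℕ} {a x : Function.End (Fin n)} (hx : x ∈ genMonoid a ⊤) :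
    (∃ π : Equiv.Perm (Fin n), x = ⇑π) ∨
      ∃ (u : Function.End (Fin n)) (π : Equiv.Perm (Fin n)), x = u ∘ a ∘ ⇑π := by
  induction hx using Submonoid.closure_induction with
  | mem y hy =>
    rcases hy with rfl | ⟨g, -, rfl⟩
    · exact Or.inr ⟨id, 1, rfl⟩
    · exact Or.inl ⟨g, rfl⟩
  | one => exact Or.inl ⟨1, rfl⟩
  | mul y z _ _ hy hz =>
    rcases hy with ⟨π₁, rfl⟩ | ⟨u, π, rfl⟩
    · rcases hz with ⟨π₂, rfl⟩ | ⟨u, π, rfl⟩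
      · exact Or.inl ⟨π₁ * π₂, rfl⟩
      · exact Or.inr ⟨⇑π₁ ∘ u, π, rfl⟩
    · rcases hz with ⟨π₂, rfl⟩ | ⟨v, π₂, rfl⟩
      · exact Or.inr ⟨u, π * π₂, by funext z; rfl⟩
      · exact Or.inr ⟨u ∘ a ∘ ⇑π ∘ v, π₂, by
          funext z; rfl⟩

end Aux

theorem stmt_13 {n : ℕ} (a : Function.End (Fin n)) (ha : ¬ Function.Bijective a) :
    {x : Function.End (Fin n) | x ∈ genMonoid a ⊤ ∧ ¬ Function.Bijective x} =
      {b : Function.End (Fin n) | ∃ g : Equiv.Perm (Fin n),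
        ∀ x y : Fin n, a x = a y → b (g x) = b (g y)} := by
  classical
  have ha' : ¬ Function.Injective a := fun h => ha (Finite.injective_iff_bijective.mp h)
  ext b
  simp only [Set.mem_setOf_eq]
  constructor
  · rintro ⟨hmem, hnb⟩
    rcases factor_of_mem hmem with ⟨π, rfl⟩ | ⟨u, π, rfl⟩
    · exact absurd π.bijective hnb
    · refine ⟨π⁻¹, fun x y hxy => ?_⟩
      show u (a (π (π⁻¹ x))) = u (a (π (π⁻¹ y)))
      rw [Equiv.Perm.coe_inv, Equiv.apply_symm_apply, Equiv.apply_symm_apply, hxy]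
  · rintro ⟨g, hg⟩
    refine ⟨key ha' b ⟨g, hg⟩, ?_⟩
    obtain ⟨u, v, hauv, huv⟩ := Function.not_injective_iff.mp ha'
    intro hb
    exact huv (g.injective (hb.injective (hg u v hauv)))
end

section
/- Let a ∈ Tₙ \ Sₙ and G ≤ Sₙ. Then ⟨a,G⟩ \ G = ⟨a,Sₙ⟩ \ Sₙ if and only if the set of elements of rank equal to rank(a) in ⟨a,G⟩ equals the set of elements of rank equal to rank(a) in ⟨a,Sₙ⟩. -/
/-!
Since `a` is not bijective, `rank a < n`, so elements of rank `rank a` are not bijective; this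
gives one direction. Conversely, a non-bijective element of `⟨a, Sₙ⟩` is a product of
"sandwiches" `h a g` with `h, g ∈ Sₙ`, because the permutations in a word over the generators
can be absorbed into the neighbouring copies of `a`. Every sandwich lies in `⟨a, Sₙ⟩` and has
rank `rank a`, so if the elements of that rank agree, all sandwiches lie in `⟨a, G⟩`, and
hence so does every non-bijective element of `⟨a, Sₙ⟩`.
-/

open Function

section Sandwiches

variable {α : Type*}

lemma Subsemigroup.mul_mem_closure_left {M : Type*} [Semigroup M] {s : Set M}
    {c : M} (hs : ∀ y ∈ s, c * y ∈ s) {x : M} (hx : x ∈ Subsemigroup.closure s) :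
    c * x ∈ Subsemigroup.closure s := by
  induction hx using Subsemigroup.closure_induction with
  | mem y hy => exact Subsemigroup.subset_closure (hs y hy)
  | mul y z _ hz ihy _ => rw [← mul_assoc]; exact mul_mem ihy hz

lemma Subsemigroup.mul_mem_closure_right {M : Type*} [Semigroup M] {s : Set M}
    {c : M} (hs : ∀ y ∈ s, y * c ∈ s) {x : M} (hx : x ∈ Subsemigroup.closure s) :
    x * c ∈ Subsemigroup.closure s := by
  induction hx using Subsemigroup.closure_induction with
  | mem y hy => exact Subsemigroup.subset_closure (hs y hy)
  | mul y z hy _ _ ihz => rw [mul_assoc]; exact mul_mem hy ihz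

def sandwiches (a : Function.End α) : Set (Function.End α) :=
  {x | ∃ h g : Equiv.Perm α, x = MulAction.toEndHom h * a * MulAction.toEndHom g}

lemma toEndHom_mul_mem_sandwiches {a y : Function.End α} (p : Equiv.Perm α)
    (hy : y ∈ sandwiches a) : MulAction.toEndHom p * y ∈ sandwiches a := by
  obtain ⟨h, g, rfl⟩ := hy
  exact ⟨p * h, g, by simp only [map_mul, mul_assoc]⟩

lemma mul_toEndHom_mem_sandwiches {a y : Function.End α} (p : Equiv.Perm α)
    (hy : y ∈ sandwiches a) : y * MulAction.toEndHom p ∈ sandwiches a := by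
  obtain ⟨h, g, rfl⟩ := hy
  exact ⟨h, g * p, by simp only [map_mul, mul_assoc]⟩

end Sandwiches

variable {n : ℕ}

lemma rank_eq_iff_bijective {f : Fin n → Fin n} : rank f = n ↔ Bijective f := by
  have hinj := Finset.card_image_iff (s := Finset.univ) (f := f)
  rw [Finset.card_univ, Fintype.card_fin, Finset.coe_univ, Set.injOn_univ] at hinj
  rw [← Finite.injective_iff_bijective, ← hinj]
  rfl

lemma not_bijective_of_rank_eq {a x : Function.End (Fin n)} (ha : ¬ Bijective a)
    (hx : rank x = rank a) : ¬ Bijective x :=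
  fun hbij => ha (rank_eq_iff_bijective.mp (hx.symm.trans (rank_eq_iff_bijective.mpr hbij)))

lemma rank_perm_comp_comp_perm (f : Fin n → Fin n) (h g : Equiv.Perm (Fin n)) :
    rank (h ∘ f ∘ g) = rank f := by
  change (Finset.univ.image (h ∘ f ∘ g)).card = (Finset.univ.image f).card
  rw [← Finset.image_image, Finset.card_image_of_injective _ h.injective, ← Finset.image_image,
    Finset.image_univ_equiv]

lemma rank_of_mem_sandwiches {a x : Function.End (Fin n)} (hx : x ∈ sandwiches a) :
    rank x = rank a := by
  obtain ⟨h, g, rfl⟩ := hx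
  exact rank_perm_comp_comp_perm a h g

lemma genMonoid_mono (a : Function.End (Fin n)) {G H : Subgroup (Equiv.Perm (Fin n))}
    (hGH : G ≤ H) : genMonoid a G ≤ genMonoid a H := by
  refine Submonoid.closure_mono (Set.union_subset_union_right _ ?_)
  rintro f ⟨g, hg, rfl⟩
  exact ⟨g, hGH hg, rfl⟩

lemma sandwiches_subset_genMonoid_top (a : Function.End (Fin n)) :
    sandwiches a ⊆ genMonoid a ⊤ := by
  rintro x ⟨h, g, rfl⟩
  have hperm (p : Equiv.Perm (Fin n)) : MulAction.toEndHom p ∈ genMonoid a ⊤ :=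
    Submonoid.subset_closure (Or.inr ⟨p, Subgroup.mem_top p, rfl⟩)
  exact mul_mem (mul_mem (hperm h) (Submonoid.subset_closure (Or.inl rfl))) (hperm g)

lemma bijective_or_mem_closure_sandwiches {a x : Function.End (Fin n)}
    {G : Subgroup (Equiv.Perm (Fin n))} (hx : x ∈ genMonoid a G) :
    Bijective x ∨ x ∈ Subsemigroup.closure (sandwiches a) := by
  induction hx using Submonoid.closure_induction with
  | mem y hy =>
    rcases hy with rfl | ⟨g, _, rfl⟩
    · exact Or.inr (Subsemigroup.subset_closure ⟨1, 1, by simp⟩)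
    · exact Or.inl g.bijective
  | one => exact Or.inl bijective_id
  | mul y z _ _ ihy ihz =>
    rcases ihy with hy | hy <;> rcases ihz with hz | hz
    · exact Or.inl (hy.comp hz)
    · exact Or.inr (Subsemigroup.mul_mem_closure_left
        (fun _ => toEndHom_mul_mem_sandwiches (Equiv.ofBijective y hy)) hz)
    · exact Or.inr (Subsemigroup.mul_mem_closure_right
        (fun _ => mul_toEndHom_mem_sandwiches (Equiv.ofBijective z hz)) hy)
    · exact Or.inr (mul_mem hy hz)

theorem stmt_14 {n : ℕ} (a : Function.End (Fin n)) (G : Subgroup (Equiv.Perm (Fin n)))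
    (ha : ¬ Function.Bijective a) :
    SnPair a G ↔
      {x : Function.End (Fin n) | x ∈ genMonoid a G ∧ rank x = rank a} =
        {x : Function.End (Fin n) | x ∈ genMonoid a ⊤ ∧ rank x = rank a} := by
  constructor
  · intro hpair
    ext x
    have hx := Set.ext_iff.mp hpair x
    simp only [Set.mem_ofPred_eq] at hx ⊢
    exact and_congr_left fun hr => by simpa [not_bijective_of_rank_eq ha hr] using hx
  · intro hrank
    ext x
    refine ⟨fun ⟨hm, hb⟩ => ⟨genMonoid_mono a le_top hm, hb⟩, fun ⟨hm, hb⟩ => ⟨?_, hb⟩⟩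
    have hsandwiches : sandwiches a ⊆ genMonoid a G := fun y hy =>
      ((Set.ext_iff.mp hrank y).mpr
        ⟨sandwiches_subset_genMonoid_top a hy, rank_of_mem_sandwiches hy⟩).1
    exact Subsemigroup.closure_le.mpr hsandwiches
      ((bijective_or_mem_closure_sandwiches hm).resolve_left hb)
end
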